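/- For every ρ ∈ W_n and m = 2^{n−1}, the maximal degree M_m(ρ) for which a Chebyshev-type quadrature with m equal-weight nodes in [-1,1] is exact equals exactly 2m − 1 = 2^n − 1. -/

import Mathlib

noncomputable def xseq : ℕ → ℝ
  | 0 => -1
  | n + 1 => Real.sqrt ((1 + xseq n) / 2)
/-- `Q p` is the Chebyshev polynomial of degree `2^p`, the `p`-fold composite of `2x²-1`. -/
noncomputable def Q (p : ℕ) : ℝ → ℝ := (fun t : ℝ => 2 * t ^ 2 - 1)^[p]
/-- `S` is the reflection associated to `P_{2^k}` on `[x_{k+1}, 1]`. -/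
def IsReflection (k : ℕ) (S : ℝ → ℝ) : Prop :=
  Set.BijOn S (Set.Icc (xseq (k + 1)) 1) (Set.Icc (xseq k) (xseq (k + 1))) ∧
  ∀ y ∈ Set.Icc (xseq (k + 1)) 1, Q k (S y) = -(Q k y)
/-- The weight class `W_n` (relative to the reflections `S k`). -/
noncomputable def memW (S : ℕ → ℝ → ℝ) (n : ℕ) (ρ : ℝ → ℝ) : Prop :=
  (∀ x ∈ Set.Ioo (-1 : ℝ) 1, 0 ≤ ρ x) ∧
  ((∫ x in (-1 : ℝ)..1, ρ x) = 1) ∧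
  ∀ k < n, ∀ y ∈ Set.Ioo (xseq (k + 1)) 1, ρ y = -(ρ (S k y) * deriv (S k) y)

/-- There is a Chebyshev-type quadrature for `ρ` with `m` distinct equal-weight nodes in
`[-1,1]`, exact on all polynomials of degree at most `N`. -/
noncomputable def ChebQuadDeg (ρ : ℝ → ℝ) (m N : ℕ) : Prop :=
  ∃ t : Fin m → ℝ, Function.Injective t ∧ (∀ k, t k ∈ Set.Icc (-1 : ℝ) 1) ∧
    ∀ P : Polynomial ℝ, P.natDegree ≤ N →
      (∫ x in (-1 : ℝ)..1, P.eval x * ρ x) = (1 / (m : ℝ)) * ∑ k, P.eval (t k)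

/-!
The reflection `S k` is forced to be `y ↦ cos (π / 2 ^ k - arccos y)`, because `Q k` is injective
on `[x_k, x_{k+1}]`; the reflection identity for `ρ` is then exactly the change of variables
`x = S k y`, which turns `∫_{x_k}^{x_{k+1}} g(Q_k) ρ` into `∫_{x_{k+1}}^1 g(-Q_k) ρ`.
Writing `T_j = T_r ∘ Q_k` with `j = 2^k r`, the integral `∫_{x_k}^1 T_j ρ` vanishes when `r` is odd
and reduces to level `k + 1` when `r` is even, so `∫_{-1}^1 T_j ρ = 0` for `0 < j < 2^n`.
Thus `ρ` has the Chebyshev moments of the Chebyshev weight up to degree `2^n - 1`, and the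
Chebyshev–Gauss nodes `cos ((2i+1)π / 2^n)` are exact. Conversely, `∏ (x - t_i)²` has degree `2m`,
vanishes at every node, and has positive integral against `ρ`.
-/

open Real Set Polynomial MeasureTheory
open Polynomial.Chebyshev (T sumZeroes)

lemma pi_div_two_pow_le_pi (k : ℕ) : π / 2 ^ k ≤ π :=
  div_le_self pi_pos.le (one_le_pow₀ one_le_two)

lemma pi_div_two_pow_succ (k : ℕ) : π / 2 ^ (k + 1) = π / 2 ^ k / 2 := by
  rw [pow_succ, div_div]

lemma xseq_eq_cos (k : ℕ) : xseq k = cos (π / 2 ^ k) := by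
  induction k with
  | zero => simp [xseq]
  | succ k ih =>
    have hπ : -π ≤ π / 2 ^ k := by linarith [pi_pos, show 0 < π / 2 ^ k by positivity]
    rw [xseq, ih, pi_div_two_pow_succ, cos_half hπ (pi_div_two_pow_le_pi k)]

lemma arccos_xseq (k : ℕ) : arccos (xseq k) = π / 2 ^ k := by
  rw [xseq_eq_cos, arccos_cos (by positivity) (pi_div_two_pow_le_pi k)]

lemma xseq_mem_Icc (k : ℕ) : xseq k ∈ Icc (-1 : ℝ) 1 := by
  rw [xseq_eq_cos]
  exact ⟨neg_one_le_cos _, cos_le_one _⟩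

lemma xseq_le_succ (k : ℕ) : xseq k ≤ xseq (k + 1) := by
  rw [xseq_eq_cos, xseq_eq_cos]
  exact cos_le_cos_of_nonneg_of_le_pi (by positivity) (pi_div_two_pow_le_pi k)
    (pi_div_two_pow_succ k ▸ half_le_self (by positivity))

lemma arccos_mem_of_mem_Icc_xseq {k : ℕ} {x : ℝ} (hx : x ∈ Icc (xseq k) (xseq (k + 1))) :
    arccos x ∈ Icc (π / 2 ^ (k + 1)) (π / 2 ^ k) := by
  rw [← arccos_xseq, ← arccos_xseq]
  exact ⟨arccos_le_arccos hx.2, arccos_le_arccos hx.1⟩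

lemma Icc_xseq_subset (k l : ℕ) : Icc (xseq k) (xseq l) ⊆ Icc (-1) 1 :=
  Icc_subset_Icc (xseq_mem_Icc k).1 (xseq_mem_Icc l).2

lemma Q_succ (k : ℕ) (x : ℝ) : Q (k + 1) x = 2 * Q k x ^ 2 - 1 :=
  Function.iterate_succ_apply' _ _ _

lemma continuous_Q (k : ℕ) : Continuous (Q k) :=
  (by fun_prop : Continuous fun t : ℝ => 2 * t ^ 2 - 1).iterate k

lemma Q_cos (k : ℕ) (θ : ℝ) : Q k (cos θ) = cos (2 ^ k * θ) := by
  induction k with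
  | zero => simp [Q]
  | succ k ih => rw [Q_succ, ih, ← cos_two_mul, pow_succ, mul_comm _ 2, mul_assoc]

lemma injOn_Q (k : ℕ) : InjOn (Q k) (Icc (xseq k) (xseq (k + 1))) := by
  have hmem : ∀ x ∈ Icc (xseq k) (xseq (k + 1)), 2 ^ k * arccos x ∈ Icc 0 π := fun x hx => by
    have h := arccos_mem_of_mem_Icc_xseq hx
    have h2k : (2 : ℝ) ^ k * (π / 2 ^ k) = π := by field_simp
    exact ⟨mul_nonneg (by positivity) (arccos_nonneg x),
      h2k ▸ mul_le_mul_of_nonneg_left h.2 (by positivity)⟩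
  have hQ : ∀ x ∈ Icc (xseq k) (xseq (k + 1)), Q k x = cos (2 ^ k * arccos x) := fun x hx => by
    have hx' := Icc_xseq_subset _ _ hx
    rw [← Q_cos, cos_arccos hx'.1 hx'.2]
  intro x hx y hy hxy
  have harccos : arccos x = arccos y := mul_left_cancel₀ (by positivity)
    (injOn_cos (hmem x hx) (hmem y hy) (by rw [← hQ x hx, ← hQ y hy, hxy]))
  exact arccos_injOn (Icc_xseq_subset _ _ hx) (Icc_xseq_subset _ _ hy) harccos

noncomputable def cosReflection (k : ℕ) (y : ℝ) : ℝ := cos (π / 2 ^ k - arccos y)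

lemma sub_arccos_mem_of_mem_Icc_xseq {k : ℕ} {y : ℝ} (hy : y ∈ Icc (xseq (k + 1)) 1) :
    π / 2 ^ k - arccos y ∈ Icc (π / 2 ^ (k + 1)) (π / 2 ^ k) := by
  have h : arccos y ≤ π / 2 ^ (k + 1) := arccos_xseq (k + 1) ▸ arccos_le_arccos hy.1
  have := pi_div_two_pow_succ k
  constructor <;> linarith [arccos_nonneg y]

lemma cosReflection_mem {k : ℕ} {y : ℝ} (hy : y ∈ Icc (xseq (k + 1)) 1) :
    cosReflection k y ∈ Icc (xseq k) (xseq (k + 1)) := by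
  have h := sub_arccos_mem_of_mem_Icc_xseq hy
  have hπ := pi_div_two_pow_le_pi k
  rw [cosReflection, xseq_eq_cos, xseq_eq_cos]
  exact ⟨cos_le_cos_of_nonneg_of_le_pi ((by positivity : (0 : ℝ) ≤ _).trans h.1) hπ h.2,
    cos_le_cos_of_nonneg_of_le_pi (by positivity) (h.2.trans hπ) h.1⟩

lemma Q_cosReflection {k : ℕ} {y : ℝ} (hy : y ∈ Icc (-1 : ℝ) 1) :
    Q k (cosReflection k y) = -Q k y := by
  have h2k : (2 : ℝ) ^ k * (π / 2 ^ k - arccos y) = π - 2 ^ k * arccos y := by field_simp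
  rw [cosReflection, Q_cos, h2k, cos_pi_sub, ← Q_cos, cos_arccos hy.1 hy.2]

lemma IsReflection.eqOn {k : ℕ} {S : ℝ → ℝ} (hS : IsReflection k S) :
    EqOn S (cosReflection k) (Icc (xseq (k + 1)) 1) := fun y hy =>
  injOn_Q k (hS.1.mapsTo hy) (cosReflection_mem hy) <| by
    rw [hS.2 y hy, Q_cosReflection (Icc_subset_Icc_left (xseq_mem_Icc _).1 hy)]

lemma hasDerivAt_cosReflection (k : ℕ) {y : ℝ} (hy : y ∈ Ioo (-1 : ℝ) 1) :
    HasDerivAt (cosReflection k) (-sin (π / 2 ^ k - arccos y) / √(1 - y ^ 2)) y :=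
  ((hasDerivAt_arccos hy.1.ne' hy.2.ne).const_sub (π / 2 ^ k)).cos.congr_deriv (by ring)

lemma IsReflection.hasDerivAt {k : ℕ} {S : ℝ → ℝ} (hS : IsReflection k S) {y : ℝ}
    (hy : y ∈ Ioo (xseq (k + 1)) 1) :
    HasDerivAt S (-sin (π / 2 ^ k - arccos y) / √(1 - y ^ 2)) y :=
  (hasDerivAt_cosReflection k ⟨(xseq_mem_Icc _).1.trans_lt hy.1, hy.2⟩).congr_of_eventuallyEq
    (Filter.eventuallyEq_of_mem (Icc_mem_nhds hy.1 hy.2) hS.eqOn)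

lemma IsReflection.deriv_nonpos {k : ℕ} {S : ℝ → ℝ} (hS : IsReflection k S) {y : ℝ}
    (hy : y ∈ Ioo (xseq (k + 1)) 1) : deriv S y ≤ 0 := by
  have h := sub_arccos_mem_of_mem_Icc_xseq (Ioo_subset_Icc_self hy)
  rw [(hS.hasDerivAt hy).deriv]
  exact div_nonpos_of_nonpos_of_nonneg (neg_nonpos.2 (sin_nonneg_of_nonneg_of_le_pi
    ((by positivity : (0 : ℝ) ≤ _).trans h.1) (h.2.trans (pi_div_two_pow_le_pi k))))
    (sqrt_nonneg _)

lemma image_Ioo_ae_eq_image_Icc (f : ℝ → ℝ) (a b : ℝ) :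
    f '' Ioo a b =ᵐ[volume] f '' Icc a b := by
  refine ae_eq_set.2 ⟨by rw [sdiff_eq_empty.2 (image_mono Ioo_subset_Icc_self), measure_empty],
    measure_mono_null ?_ ((toFinite (f '' {a, b})).measure_zero _)⟩
  rintro _ ⟨⟨z, hz, rfl⟩, hz'⟩
  refine mem_image_of_mem f ?_
  by_contra hab
  simp only [mem_insert_iff, mem_singleton_iff, not_or] at hab
  exact hz' (mem_image_of_mem f ⟨hz.1.lt_of_ne' hab.1, hz.2.lt_of_ne hab.2⟩)

lemma IsReflection.integral_mul_eq {k : ℕ} {S ρ : ℝ → ℝ} (hS : IsReflection k S)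
    (hρ : ∀ y ∈ Ioo (xseq (k + 1)) 1, ρ y = -(ρ (S y) * deriv S y)) (f : ℝ → ℝ) :
    ∫ x in xseq k..xseq (k + 1), f x * ρ x = ∫ y in xseq (k + 1)..1, f (S y) * ρ y := by
  have hderiv : ∀ y ∈ Ioo (xseq (k + 1)) 1,
      HasDerivWithinAt S (deriv S y) (Ioo (xseq (k + 1)) 1) y :=
    fun y hy => (hS.hasDerivAt hy).differentiableAt.hasDerivAt.hasDerivWithinAt
  rw [intervalIntegral.integral_of_le (xseq_le_succ k),
    intervalIntegral.integral_of_le (xseq_mem_Icc _).2, ← integral_Icc_eq_integral_Ioc,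
    integral_Ioc_eq_integral_Ioo, ← hS.1.image_eq,
    ← setIntegral_congr_set (image_Ioo_ae_eq_image_Icc S _ _),
    integral_image_eq_integral_abs_deriv_smul measurableSet_Ioo hderiv
      (hS.1.injOn.mono Ioo_subset_Icc_self)]
  refine setIntegral_congr_fun measurableSet_Ioo fun y hy => ?_
  rw [smul_eq_mul, abs_of_nonpos (hS.deriv_nonpos hy), hρ y hy]
  ring

lemma IntervalIntegrable.continuous_mul_of_mem_uIcc {ρ f : ℝ → ℝ} {a b c d : ℝ}
    (hρ : IntervalIntegrable ρ volume a b) (hf : Continuous f) (hc : c ∈ uIcc a b)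
    (hd : d ∈ uIcc a b) : IntervalIntegrable (fun x => f x * ρ x) volume c d :=
  (hρ.mono_set (uIcc_subset_uIcc hc hd)).continuousOn_mul hf.continuousOn

lemma xseq_mem_uIcc (k : ℕ) : xseq k ∈ uIcc (-1 : ℝ) 1 := by
  rw [uIcc_of_le (by norm_num)]
  exact xseq_mem_Icc k

lemma IsReflection.integral_comp_Q_mul {k : ℕ} {S ρ g : ℝ → ℝ} (hS : IsReflection k S)
    (hρ : ∀ y ∈ Ioo (xseq (k + 1)) 1, ρ y = -(ρ (S y) * deriv S y))
    (hρint : IntervalIntegrable ρ volume (-1) 1) (hg : Continuous g) :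
    ∫ x in xseq k..1, g (Q k x) * ρ x =
      ∫ y in xseq (k + 1)..1, (g (-Q k y) + g (Q k y)) * ρ y := by
  have hgQ : Continuous fun x => g (Q k x) := hg.comp (continuous_Q k)
  have hgnQ : Continuous fun x => g (-Q k x) := hg.comp (continuous_Q k).neg
  have hreflect : ∫ x in xseq k..xseq (k + 1), g (Q k x) * ρ x =
      ∫ y in xseq (k + 1)..1, g (-Q k y) * ρ y := by
    rw [hS.integral_mul_eq hρ]
    refine intervalIntegral.integral_congr fun y hy => ?_
    rw [uIcc_of_le (xseq_mem_Icc _).2] at hy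
    simp only [hS.2 y hy]
  simp_rw [add_mul]
  rw [intervalIntegral.integral_add
      (hρint.continuous_mul_of_mem_uIcc hgnQ (xseq_mem_uIcc _) right_mem_uIcc)
      (hρint.continuous_mul_of_mem_uIcc hgQ (xseq_mem_uIcc _) right_mem_uIcc),
    ← hreflect, intervalIntegral.integral_add_adjacent_intervals
      (hρint.continuous_mul_of_mem_uIcc hgQ (xseq_mem_uIcc _) (xseq_mem_uIcc _))
      (hρint.continuous_mul_of_mem_uIcc hgQ (xseq_mem_uIcc _) right_mem_uIcc)]

lemma integral_T_comp_Q_mul_eq_zero {n : ℕ} {S : ℕ → ℝ → ℝ} {ρ : ℝ → ℝ}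
    (hS : ∀ k < n, IsReflection k (S k))
    (hρ : ∀ k < n, ∀ y ∈ Ioo (xseq (k + 1)) 1, ρ y = -(ρ (S k y) * deriv (S k) y))
    (hρint : IntervalIntegrable ρ volume (-1) 1) {k : ℕ} (hk : k ≤ n) {r : ℕ} (hr : r ≠ 0)
    (hkr : 2 ^ k * r < 2 ^ n) :
    ∫ x in xseq k..1, (T ℝ r).eval (Q k x) * ρ x = 0 := by
  induction hk using Nat.decreasingInduction generalizing r with
  | self => exact absurd hkr (not_lt.2 (Nat.le_mul_of_pos_right _ (Nat.pos_of_ne_zero hr)))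
  | of_succ k hk ih =>
    rw [(hS k hk).integral_comp_Q_mul (hρ k hk) hρint (T ℝ r).continuous]
    rcases Nat.even_or_odd r with ⟨s, rfl⟩ | hodd
    · have hT : ∀ y, (T ℝ ↑(s + s)).eval (-Q k y) + (T ℝ ↑(s + s)).eval (Q k y)
          = 2 * (T ℝ s).eval (Q (k + 1) y) := fun y => by
        rw [Chebyshev.T_eval_neg, Int.negOnePow_even _ (by simp), Q_succ,
          show ((s + s : ℕ) : ℤ) = s * 2 by push_cast; ring, Chebyshev.T_mul, eval_comp,
          Chebyshev.T_two]
        simp only [Units.val_one, Int.cast_one, one_mul, eval_sub, eval_mul, eval_ofNat, eval_pow,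
          eval_X, eval_one]
        ring
      simp_rw [hT, mul_assoc, intervalIntegral.integral_const_mul]
      rw [ih (by omega) (by rw [pow_succ]; linarith), mul_zero]
    · have hT : ∀ u, (T ℝ r).eval (-u) + (T ℝ r).eval u = 0 := fun u => by
        rw [Chebyshev.T_eval_neg, Int.negOnePow_odd _ (by exact_mod_cast hodd)]
        simp
      simp only [hT, zero_mul, intervalIntegral.integral_zero]

lemma integral_T_mul_eq_zero {n : ℕ} {S : ℕ → ℝ → ℝ} {ρ : ℝ → ℝ}
    (hS : ∀ k < n, IsReflection k (S k)) (hρ : memW S n ρ) {j : ℕ} (hj0 : j ≠ 0)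
    (hj : j < 2 ^ n) :
    ∫ x in (-1 : ℝ)..1, (T ℝ j).eval x * ρ x = 0 := by
  simpa [Q, xseq] using integral_T_comp_Q_mul_eq_zero hS hρ.2.2
    (intervalIntegral.intervalIntegrable_of_integral_ne_zero (by simp [hρ.2.1])) (Nat.zero_le n)
    hj0 (by simpa using hj)

lemma integral_eval_mul_eq_sumZeroes {ρ : ℝ → ℝ} {m : ℕ} (hm : m ≠ 0)
    (hρ1 : ∫ x in (-1 : ℝ)..1, ρ x = 1)
    (hT : ∀ j : ℕ, j ≠ 0 → j < 2 * m → ∫ x in (-1 : ℝ)..1, (T ℝ j).eval x * ρ x = 0)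
    {P : ℝ[X]} (hP : P.degree < 2 * m) :
    ∫ x in (-1 : ℝ)..1, P.eval x * ρ x = sumZeroes m P / π := by
  have hρint : IntervalIntegrable ρ volume (-1) 1 :=
    intervalIntegral.intervalIntegrable_of_integral_ne_zero (by simp [hρ1])
  have hint (R : ℝ[X]) : IntervalIntegrable (fun x => R.eval x * ρ x) volume (-1) 1 :=
    hρint.continuous_mul_of_mem_uIcc R.continuous left_mem_uIcc right_mem_uIcc
  have hmem : P ∈ degreeLT ℝ (2 * m) := mem_degreeLT.2 hP
  rw [← Sequence.span_degreeLT (Chebyshev.chebyshevTsequence ℝ) (by simp)] at hmem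
  clear hP
  induction hmem using Submodule.span_induction with
  | mem R hR =>
    obtain ⟨j, hj, rfl⟩ := hR
    change ∫ x in (-1 : ℝ)..1, (T ℝ j).eval x * ρ x = sumZeroes m (T ℝ j) / π
    rw [mem_Iio] at hj
    rcases eq_or_ne j 0 with rfl | hj0
    · rw [Nat.cast_zero, Chebyshev.sumZeroes_T_zero hm, div_self pi_ne_zero, Chebyshev.T_zero]
      simpa using hρ1
    · have hndvd : ¬ (2 * m : ℤ) ∣ j := fun h => by
        have := Int.le_of_dvd (by omega) h
        omega
      rw [hT j hj0 hj, Chebyshev.sumZeroes_T_of_not_dvd hndvd, zero_div]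
  | zero => simp [sumZeroes]
  | add R R' _ _ hR hR' =>
    simp_rw [eval_add, add_mul]
    rw [intervalIntegral.integral_add (hint R) (hint R'), hR, hR']
    simp only [sumZeroes, eval_add, Finset.sum_add_distrib]
    ring
  | smul c R _ hR =>
    simp_rw [eval_smul, smul_eq_mul, mul_assoc]
    rw [intervalIntegral.integral_const_mul, hR, Chebyshev.sumZeroes_smul]
    ring

theorem chebQuadDeg_of_integral_T_mul_eq_zero {ρ : ℝ → ℝ} {m : ℕ} (hm : m ≠ 0)
    (hρ1 : ∫ x in (-1 : ℝ)..1, ρ x = 1)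
    (hT : ∀ j : ℕ, j ≠ 0 → j < 2 * m → ∫ x in (-1 : ℝ)..1, (T ℝ j).eval x * ρ x = 0) :
    ChebQuadDeg ρ m (2 * m - 1) := by
  refine ⟨fun i => cos ((2 * i + 1) / (2 * m) * π), fun i i' h => Fin.ext ?_,
    fun i => ⟨neg_one_le_cos _, cos_le_one _⟩, fun P hP => ?_⟩
  · simp only [div_mul_eq_mul_div] at h
    exact (Finset.range m).nodup_map_iff_injOn.mp (Chebyshev.roots_T_real_nodup m)
      (by simp) (by simp) h
  · have hPdeg : P.degree < 2 * m :=
      degree_le_natDegree.trans_lt (by exact_mod_cast (by omega : P.natDegree < 2 * m))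
    rw [integral_eval_mul_eq_sumZeroes hm hρ1 hT hPdeg, sumZeroes,
      Fin.sum_univ_eq_sum_range (fun i => P.eval (cos ((2 * i + 1) / (2 * m) * π)))]
    field_simp

lemma integral_eq_zero_of_integral_eval_mul_eq_zero {ρ : ℝ → ℝ} {a b : ℝ} (hab : a ≤ b)
    {P : ℝ[X]} (hP0 : P ≠ 0) (hP : ∀ x ∈ Ioo a b, 0 ≤ P.eval x) (hρ : ∀ x ∈ Ioo a b, 0 ≤ ρ x)
    (hPρ : IntervalIntegrable (fun x => P.eval x * ρ x) volume a b)
    (h : ∫ x in a..b, P.eval x * ρ x = 0) :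
    ∫ x in a..b, ρ x = 0 := by
  rw [intervalIntegral.integral_of_le hab, integral_Ioc_eq_integral_Ioo] at h ⊢
  have hPρ0 : (fun x => P.eval x * ρ x) =ᵐ[volume.restrict (Ioo a b)] 0 :=
    (integral_eq_zero_iff_of_nonneg_ae
      ((ae_restrict_iff' measurableSet_Ioo).2
        (.of_forall fun x hx => mul_nonneg (hP x hx) (hρ x hx)))
      (hPρ.1.mono_set Ioo_subset_Ioc_self)).1 h
  have hPne : ∀ᵐ x ∂volume.restrict (Ioo a b), P.eval x ≠ 0 :=
    ae_restrict_of_ae (measure_mono_null (fun x hx => not_not.1 hx)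
      ((finite_setOfPred_isRoot hP0).measure_zero volume))
  refine integral_eq_zero_of_ae ?_
  filter_upwards [hPρ0, hPne] with x h1 h2
  exact (mul_eq_zero.1 h1).resolve_left h2

theorem not_chebQuadDeg_two_mul {ρ : ℝ → ℝ} (hρ0 : ∀ x ∈ Ioo (-1 : ℝ) 1, 0 ≤ ρ x)
    (hρ1 : ∫ x in (-1 : ℝ)..1, ρ x = 1) (m : ℕ) : ¬ ChebQuadDeg ρ m (2 * m) := by
  rintro ⟨t, -, -, hquad⟩
  set P : ℝ[X] := (∏ i, (X - C (t i))) ^ 2 with hP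
  have hP0 : P ≠ 0 :=
    pow_ne_zero _ (monic_prod_of_monic _ _ fun i _ => monic_X_sub_C (t i)).ne_zero
  have hPdeg : P.natDegree ≤ 2 * m := by
    rw [hP, natDegree_pow, natDegree_finsetProd_X_sub_C_eq_card, Finset.card_univ, Fintype.card_fin,
      mul_comm]
  have hPt (i : Fin m) : P.eval (t i) = 0 := by
    simp [hP, eval_prod, Finset.prod_eq_zero (Finset.mem_univ i)]
  have hρint : IntervalIntegrable ρ volume (-1) 1 :=
    intervalIntegral.intervalIntegrable_of_integral_ne_zero (by simp [hρ1])
  refine one_ne_zero (hρ1.symm.trans (integral_eq_zero_of_integral_eval_mul_eq_zero (by norm_num)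
    hP0 (fun x _ => by rw [hP, eval_pow]; exact sq_nonneg _) hρ0
    (hρint.continuous_mul_of_mem_uIcc P.continuous left_mem_uIcc right_mem_uIcc) ?_))
  rw [hquad P hPdeg]
  simp [hPt]

/-- For `ρ ∈ W_n` and `m = 2^{n-1}`, the maximal exact degree is exactly `2m - 1 = 2^n - 1`:
a Chebyshev-type quadrature of degree `2^n - 1` exists, but none of degree `2^n`. -/
theorem max_degree_eq (n : ℕ) (hn : 1 ≤ n) (S : ℕ → ℝ → ℝ)
    (hS : ∀ k < n, IsReflection k (S k)) (ρ : ℝ → ℝ) (hρ : memW S n ρ) :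
    ChebQuadDeg ρ (2 ^ (n - 1)) (2 ^ n - 1) ∧ ¬ ChebQuadDeg ρ (2 ^ (n - 1)) (2 ^ n) := by
  have h2m : 2 * 2 ^ (n - 1) = 2 ^ n := by rw [← pow_succ', Nat.sub_add_cancel hn]
  rw [← h2m]
  exact ⟨chebQuadDeg_of_integral_T_mul_eq_zero (by positivity) hρ.2.1
      fun j hj0 hj => integral_T_mul_eq_zero hS hρ hj0 (h2m ▸ hj),
    not_chebQuadDeg_two_mul hρ.1 hρ.2.1 _⟩
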